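/- Let G be a 3-γₜ-edge-critical graph and uv a missing edge of G. Then either {u, v} dominates G, or there exists a vertex z such that uz is an edge, z is nonadjacent to v, and {u, z} dominates all of G except v, or there exists a vertex z such that zv is an edge, z is nonadjacent to u, and {z, v} dominates all of G except u. -/

import Mathlib

/-- The total domination number of a graph, as an extended natural number
(`⊤` when no total dominating set exists). -/
noncomputable def gammaT {V : Type*} (G : SimpleGraph V) : ℕ∞ :=
  sInf {n : ℕ∞ | ∃ S : Finset V, (S.card : ℕ∞) = n ∧ ∀ v : V, ∃ u ∈ S, G.Adj v u}

/-- G has diameter two. -/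
def DiamTwo {V : Type*} (G : SimpleGraph V) : Prop :=
  (∀ u v : V, u ≠ v → G.Adj u v ∨ ∃ w : V, G.Adj u w ∧ G.Adj w v) ∧
    ∃ u v : V, u ≠ v ∧ ¬ G.Adj u v

/-- Removing the vertex set S disconnects G. -/
def RemovalDisconnects {V : Type*} (G : SimpleGraph V) (S : Set V) : Prop :=
  ∃ a b : (Sᶜ : Set V), ¬ (G.induce Sᶜ).Reachable a b

/-- G is 3-γₜ-edge-critical. -/
def Critical3 {V : Type*} [DecidableEq V] (G : SimpleGraph V) : Prop :=
  gammaT G = 3 ∧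
    ∀ u v : V, u ≠ v → ¬ G.Adj u v →
      gammaT (G ⊔ SimpleGraph.fromEdgeSet {s(u, v)}) = 2


/-! A total dominating pair `{a, b}` of `G + uv` must use the new edge, since no pair totally
dominates `G`; so it contains `u` or `v`. If it is `{u, v}`, every other vertex has a neighbour
among `u, v` in `G`. If it is `{u, z}` with `z ≠ v`, then `z` needs the neighbour `u`, every
vertex except `v` is dominated in `G`, and `z` is not adjacent to `v`, since otherwise `{u, z}`
would totally dominate `G`. -/

open SimpleGraph

section TotalDomination

variable {V : Type*} {G : SimpleGraph V}

theorem gammaT_le_card {S : Finset V} (hS : ∀ w, ∃ x ∈ S, G.Adj w x) :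
    gammaT G ≤ S.card :=
  sInf_le ⟨S, rfl, hS⟩

theorem exists_card_eq_of_gammaT_eq {n : ℕ} (h : gammaT G = n) :
    ∃ S : Finset V, S.card = n ∧ ∀ w, ∃ x ∈ S, G.Adj w x := by
  have hne : {m : ℕ∞ | ∃ S : Finset V, (S.card : ℕ∞) = m ∧
      ∀ w, ∃ x ∈ S, G.Adj w x}.Nonempty := by
    by_contra hempty
    rw [Set.not_nonempty_iff_eq_empty] at hempty
    rw [gammaT, hempty, sInf_empty] at h
    exact ENat.top_ne_natCast n h
  obtain ⟨S, hS, hdom⟩ : gammaT G ∈ _ := csInf_mem hne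
  rw [h] at hS
  exact ⟨S, by exact_mod_cast hS, hdom⟩

theorem not_dominates_pair_of_gammaT_eq_three (h : gammaT G = 3) (a b : V) :
    ¬ ∀ w, G.Adj w a ∨ G.Adj w b := by
  classical
  intro hdom
  have hle : gammaT G ≤ ({a, b} : Finset V).card :=
    gammaT_le_card fun w => by simpa using hdom w
  rw [h] at hle
  have hcard : (({a, b} : Finset V).card : ℕ∞) ≤ 2 := by exact_mod_cast Finset.card_le_two
  exact absurd (hle.trans hcard) (by decide)

end TotalDomination

section AddEdge

variable {V : Type*} {G : SimpleGraph V} {u v : V}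

theorem adj_of_sup_edge_adj {w x : V} (h : (G ⊔ edge u v).Adj w x) (hxu : x ≠ u)
    (hxv : x ≠ v) : G.Adj w x := by
  rw [sup_adj, edge_adj] at h
  grind

theorem mem_of_dominates_sup_edge (hno : ∀ a b, ¬ ∀ w, G.Adj w a ∨ G.Adj w b) {a b : V}
    (hdom : ∀ w, (G ⊔ edge u v).Adj w a ∨ (G ⊔ edge u v).Adj w b) :
    a = u ∨ a = v ∨ b = u ∨ b = v := by
  by_contra! hab
  obtain ⟨hau, hav, hbu, hbv⟩ := hab
  exact hno a b fun w =>
    (hdom w).imp (adj_of_sup_edge_adj · hau hav) (adj_of_sup_edge_adj · hbu hbv)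

theorem dominates_or_exists_of_sup_edge_left
    (hno : ∀ a b, ¬ ∀ w, G.Adj w a ∨ G.Adj w b) {z : V}
    (hdom : ∀ w, (G ⊔ edge u v).Adj w u ∨ (G ⊔ edge u v).Adj w z) :
    (∀ w, w = u ∨ w = v ∨ G.Adj u w ∨ G.Adj v w) ∨
      ∃ z, G.Adj u z ∧ ¬ G.Adj z v ∧
        ∀ w, w ≠ v → w = u ∨ w = z ∨ G.Adj u w ∨ G.Adj z w := by
  have hdom_off : ∀ w, w ≠ u → w ≠ v → G.Adj u w ∨ G.Adj z w := fun w hwu hwv =>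
    (hdom w).imp (adj_of_sup_edge_adj ·.symm hwu hwv) (adj_of_sup_edge_adj ·.symm hwu hwv)
  by_cases hzv : z = v
  · subst hzv
    left
    intro w
    by_cases hwu : w = u
    · exact Or.inl hwu
    by_cases hwv : w = z
    · exact Or.inr (Or.inl hwv)
    exact Or.inr (Or.inr (hdom_off w hwu hwv))
  have hzu : z ≠ u := by
    rintro rfl
    exact (hdom z).elim (·.ne rfl) (·.ne rfl)
  have huz : G.Adj u z := (hdom_off z hzu hzv).resolve_right G.irrefl
  right
  refine ⟨z, huz, fun hzv' => hno u z fun w => ?_, fun w hwv => ?_⟩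
  · by_cases hwu : w = u
    · exact Or.inr (hwu ▸ huz)
    by_cases hwv : w = v
    · exact Or.inr (hwv ▸ hzv'.symm)
    exact (hdom_off w hwu hwv).imp (·.symm) (·.symm)
  · by_cases hwu : w = u
    · exact Or.inl hwu
    exact Or.inr (Or.inr (hdom_off w hwu hwv))

theorem dominates_or_exists_of_sup_edge_right
    (hno : ∀ a b, ¬ ∀ w, G.Adj w a ∨ G.Adj w b) {z : V}
    (hdom : ∀ w, (G ⊔ edge u v).Adj w v ∨ (G ⊔ edge u v).Adj w z) :
    (∀ w, w = u ∨ w = v ∨ G.Adj u w ∨ G.Adj v w) ∨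
      ∃ z, G.Adj z v ∧ ¬ G.Adj z u ∧
        ∀ w, w ≠ u → w = z ∨ w = v ∨ G.Adj z w ∨ G.Adj v w := by
  rw [edge_comm] at hdom
  rcases dominates_or_exists_of_sup_edge_left hno hdom with
    hpair | ⟨z, hvz, hzu, hz⟩
  · exact Or.inl fun w => by have := hpair w; tauto
  · exact Or.inr ⟨z, hvz.symm, hzu, fun w hwu => by have := hz w hwu; tauto⟩

end AddEdge

/-- For a missing edge uv of a 3-γₜ-edge-critical graph, either
{u,v} dominates G, or some uz → v, or some zv → u. -/
theorem stmt10 {V : Type*} [DecidableEq V] (G : SimpleGraph V)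
    (hcrit : Critical3 G) (u v : V) (huv : u ≠ v) (hnadj : ¬ G.Adj u v) :
    (∀ w : V, w = u ∨ w = v ∨ G.Adj u w ∨ G.Adj v w) ∨
      (∃ z : V, G.Adj u z ∧ ¬ G.Adj z v ∧
        ∀ w : V, w ≠ v → (w = u ∨ w = z ∨ G.Adj u w ∨ G.Adj z w)) ∨
      (∃ z : V, G.Adj z v ∧ ¬ G.Adj z u ∧
        ∀ w : V, w ≠ u → (w = z ∨ w = v ∨ G.Adj z w ∨ G.Adj v w)) := by
  obtain ⟨hG, hG_add⟩ := hcrit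
  have hno := not_dominates_pair_of_gammaT_eq_three hG
  obtain ⟨S, hS, hdom⟩ :=
    exists_card_eq_of_gammaT_eq (G := G ⊔ edge u v) (hG_add u v huv hnadj)
  obtain ⟨a, b, -, rfl⟩ := Finset.card_eq_two.mp hS
  replace hdom : ∀ w, (G ⊔ edge u v).Adj w a ∨ (G ⊔ edge u v).Adj w b := fun w => by
    simpa only [Finset.mem_insert, Finset.mem_singleton, exists_eq_or_imp, exists_eq_left]
      using hdom w
  have hdom' : ∀ w, (G ⊔ edge u v).Adj w b ∨ (G ⊔ edge u v).Adj w a :=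
    fun w => (hdom w).symm
  rcases mem_of_dominates_sup_edge hno hdom with rfl | rfl | rfl | rfl
  · exact (dominates_or_exists_of_sup_edge_left hno hdom).imp_right Or.inl
  · exact (dominates_or_exists_of_sup_edge_right hno hdom).imp_right Or.inr
  · exact (dominates_or_exists_of_sup_edge_left hno hdom').imp_right Or.inl
  · exact (dominates_or_exists_of_sup_edge_right hno hdom').imp_right Or.inr
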